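/- arXiv:2403.13212 — 2 statements merged into one kernel-verified Lean document; each statement's English description precedes it below -/
import Mathlib

section
/- Let $m > d$ and let $\chi \in C_0^\infty(\mathbb{R}^d)$ be radially symmetric with $\chi(\xi) = 1$ for $|\xi| \le 1$. Then the function $g(y) := (2\pi)^{-d}\int_{\mathbb{R}^d} e^{i y\cdot\xi} |\xi|^{-m}(\chi(|y|\xi) - \chi(\xi))\,\mathrm{d}\xi$ is well-defined (the integrand is absolutely integrable for each $y \neq 0$) and there holds the decomposition $\mathcal{F}^{-1}((1-\chi)|\cdot|^{-m})(y) = c_1 |y|^{m-d} + g(y)$ for $y \neq 0$, where $c_1 = \mathcal{F}^{-1}((1-\chi)|\cdot|^{-m})(\hat{y})$ is a finite constant independent of the unit vector $\hat{y} = y/|y|$. -/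
open MeasureTheory

lemma aux_integrable (d : ℕ) (m : ℝ) (hm0 : 0 < m) (hm : (d : ℝ) < m)
    (ψ : EuclideanSpace ℝ (Fin d) → ℝ) (hψ : Continuous ψ)
    (B : ℝ) (hB : ∀ ξ, |ψ ξ| ≤ B)
    (ε : ℝ) (hε : 0 < ε) (h0 : ∀ ξ : EuclideanSpace ℝ (Fin d), ‖ξ‖ < ε → ψ ξ = 0)
    (w : EuclideanSpace ℝ (Fin d)) :
    Integrable (fun ξ : EuclideanSpace ℝ (Fin d) =>
      Complex.exp (Complex.I * ((inner ℝ w ξ : ℝ) : ℂ)) * ((ψ ξ * ‖ξ‖ ^ (-m) : ℝ) : ℂ)) := by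
  have hBnn : 0 ≤ B := le_trans (abs_nonneg _) (hB 0)
  have hnorm : ∀ ξ : EuclideanSpace ℝ (Fin d),
      ‖Complex.exp (Complex.I * ((inner ℝ w ξ : ℝ) : ℂ)) * ((ψ ξ * ‖ξ‖ ^ (-m) : ℝ) : ℂ)‖
        = |ψ ξ| * ‖ξ‖ ^ (-m) := by
    intro ξ
    rw [norm_mul]
    have h1 : ‖Complex.exp (Complex.I * ((inner ℝ w ξ : ℝ) : ℂ))‖ = 1 := by
      rw [Complex.norm_exp]
      simp [Complex.mul_re]
    rw [h1, one_mul, Complex.norm_real, Real.norm_eq_abs, abs_mul,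
      abs_of_nonneg (Real.rpow_nonneg (norm_nonneg ξ) _)]
  have key := ((integrable_one_add_norm (E := EuclideanSpace ℝ (Fin d)) (μ := volume)
      (r := m) (by rwa [finrank_euclideanSpace_fin]))).const_mul (B * (1 + ε⁻¹) ^ m)
  refine key.mono' ?_ (Filter.Eventually.of_forall fun ξ => ?_)
  · apply Measurable.aestronglyMeasurable
    have hc : Continuous fun ξ : EuclideanSpace ℝ (Fin d) =>
        Complex.exp (Complex.I * ((inner ℝ w ξ : ℝ) : ℂ)) :=
      Complex.continuous_exp.comp (continuous_const.mul
        (Complex.continuous_ofReal.comp (continuous_const.inner continuous_id)))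
    exact hc.measurable.mul (by fun_prop)
  · rw [hnorm ξ]
    by_cases hξ : ‖ξ‖ < ε
    · rw [h0 ξ hξ]
      simp only [abs_zero, zero_mul]
      have : (0:ℝ) ≤ (1 + ‖ξ‖) ^ (-m) := Real.rpow_nonneg (by positivity) _
      exact mul_nonneg (mul_nonneg hBnn (by positivity)) this
    · push_neg at hξ
      have hξ0 : 0 < ‖ξ‖ := lt_of_lt_of_le hε hξ
      have ha : 0 < ‖ξ‖ ^ m := Real.rpow_pos_of_pos hξ0 m
      have hb : 0 < (1 + ‖ξ‖) ^ m := Real.rpow_pos_of_pos (by positivity) m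
      have h2 : (1 + ‖ξ‖) ^ m ≤ (1 + ε⁻¹) ^ m * ‖ξ‖ ^ m := by
        rw [← Real.mul_rpow (by positivity) (norm_nonneg _)]
        apply Real.rpow_le_rpow (by positivity) _ hm0.le
        have h1ε : (1:ℝ) ≤ ε⁻¹ * ‖ξ‖ := by
          calc (1:ℝ) = ε⁻¹ * ε := by field_simp
          _ ≤ ε⁻¹ * ‖ξ‖ := mul_le_mul_of_nonneg_left hξ (by positivity)
        nlinarith [norm_nonneg ξ]
      have h3 : (‖ξ‖ ^ m)⁻¹ ≤ (1 + ε⁻¹) ^ m * ((1 + ‖ξ‖) ^ m)⁻¹ := by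
        rw [← div_eq_mul_inv, le_div_iff₀ hb, inv_mul_le_iff₀ ha]
        linarith [h2]
      calc |ψ ξ| * ‖ξ‖ ^ (-m)
          ≤ B * ((1 + ε⁻¹) ^ m * (1 + ‖ξ‖) ^ (-m)) := by
            rw [Real.rpow_neg (norm_nonneg _), Real.rpow_neg (by positivity : (0:ℝ) ≤ 1 + ‖ξ‖)]
            exact mul_le_mul (hB ξ) h3 (by positivity) hBnn
        _ = B * (1 + ε⁻¹) ^ m * (1 + ‖ξ‖) ^ (-m) := by ring

lemma aux_rot (d : ℕ) (m : ℝ) (χ : EuclideanSpace ℝ (Fin d) → ℝ)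
    (hχ_radial : ∀ ξ η : EuclideanSpace ℝ (Fin d), ‖ξ‖ = ‖η‖ → χ ξ = χ η)
    (θ θ' : EuclideanSpace ℝ (Fin d)) (h : ‖θ‖ = ‖θ'‖) :
    (∫ ξ : EuclideanSpace ℝ (Fin d),
        Complex.exp (Complex.I * ((inner ℝ θ ξ : ℝ) : ℂ)) * (((1 - χ ξ) * ‖ξ‖ ^ (-m) : ℝ) : ℂ)) =
    ∫ ξ : EuclideanSpace ℝ (Fin d),
        Complex.exp (Complex.I * ((inner ℝ θ' ξ : ℝ) : ℂ)) * (((1 - χ ξ) * ‖ξ‖ ^ (-m) : ℝ) : ℂ) := by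
  set R := Submodule.reflection (ℝ ∙ (θ - θ'))ᗮ with hRdef
  have hR : R θ = θ' := Submodule.reflection_sub h
  have hmp : MeasurePreserving R := R.measurePreserving
  have hcomp := hmp.integral_comp R.toHomeomorph.measurableEmbedding
    (fun ξ : EuclideanSpace ℝ (Fin d) =>
      Complex.exp (Complex.I * ((inner ℝ θ' ξ : ℝ) : ℂ)) * (((1 - χ ξ) * ‖ξ‖ ^ (-m) : ℝ) : ℂ))
  rw [← hcomp]
  congr 1
  funext ξ
  have h1 : (inner ℝ θ' (R ξ) : ℝ) = (inner ℝ θ ξ : ℝ) := by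
    rw [← hR]; exact R.inner_map_map θ ξ
  have h2 : χ (R ξ) = χ ξ := hχ_radial _ _ (R.norm_map ξ)
  rw [h1, h2, R.norm_map]

theorem inverse_fourier_decomposition_of_cutoff_power
    (d : ℕ) (hd : 1 ≤ d) (m : ℝ) (hm : (d : ℝ) < m)
    (χ : EuclideanSpace ℝ (Fin d) → ℝ)
    (hχ_smooth : ContDiff ℝ (⊤ : ℕ∞) χ) (hχ_supp : HasCompactSupport χ)
    (hχ_radial : ∀ ξ η : EuclideanSpace ℝ (Fin d), ‖ξ‖ = ‖η‖ → χ ξ = χ η)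
    (hχ_one : ∀ ξ : EuclideanSpace ℝ (Fin d), ‖ξ‖ ≤ 1 → χ ξ = 1) :
    ∃ c₁ : ℂ,
      (∀ θu : EuclideanSpace ℝ (Fin d), ‖θu‖ = 1 →
        c₁ = (((2 * Real.pi) ^ (-(d : ℝ)) : ℝ) : ℂ) *
          ∫ ξ : EuclideanSpace ℝ (Fin d),
            Complex.exp (Complex.I * ((inner ℝ θu ξ : ℝ) : ℂ)) *
              (((1 - χ ξ) * ‖ξ‖ ^ (-m) : ℝ) : ℂ)) ∧
      ∀ y : EuclideanSpace ℝ (Fin d), y ≠ 0 →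
        Integrable (fun ξ : EuclideanSpace ℝ (Fin d) =>
          Complex.exp (Complex.I * ((inner ℝ y ξ : ℝ) : ℂ)) *
            ((‖ξ‖ ^ (-m) * (χ (‖y‖ • ξ) - χ ξ) : ℝ) : ℂ)) ∧
        (((2 * Real.pi) ^ (-(d : ℝ)) : ℝ) : ℂ) *
            (∫ ξ : EuclideanSpace ℝ (Fin d),
              Complex.exp (Complex.I * ((inner ℝ y ξ : ℝ) : ℂ)) *
                (((1 - χ ξ) * ‖ξ‖ ^ (-m) : ℝ) : ℂ)) =
          c₁ * ((‖y‖ ^ (m - d) : ℝ) : ℂ) +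
            (((2 * Real.pi) ^ (-(d : ℝ)) : ℝ) : ℂ) *
              ∫ ξ : EuclideanSpace ℝ (Fin d),
                Complex.exp (Complex.I * ((inner ℝ y ξ : ℝ) : ℂ)) *
                  ((‖ξ‖ ^ (-m) * (χ (‖y‖ • ξ) - χ ξ) : ℝ) : ℂ) := by
  have hm0 : 0 < m := lt_of_le_of_lt (Nat.cast_nonneg d) hm
  obtain ⟨B, hB⟩ := hχ_supp.exists_bound_of_continuous hχ_smooth.continuous
  have hB' : ∀ ξ, |χ ξ| ≤ B := fun ξ => by simpa [Real.norm_eq_abs] using hB ξ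
  set θ₀ : EuclideanSpace ℝ (Fin d) := EuclideanSpace.single ⟨0, hd⟩ (1:ℝ) with hθ₀def
  have hθ₀ : ‖θ₀‖ = 1 := by rw [hθ₀def, EuclideanSpace.norm_single]; norm_num
  refine ⟨(((2 * Real.pi) ^ (-(d : ℝ)) : ℝ) : ℂ) *
      ∫ ξ : EuclideanSpace ℝ (Fin d),
        Complex.exp (Complex.I * ((inner ℝ θ₀ ξ : ℝ) : ℂ)) * (((1 - χ ξ) * ‖ξ‖ ^ (-m) : ℝ) : ℂ),
    fun θu hθu => ?_, fun y hy => ?_⟩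
  · rw [aux_rot d m χ hχ_radial θ₀ θu (by rw [hθ₀, hθu])]
  · have hr : 0 < ‖y‖ := norm_pos_iff.mpr hy
    set r := ‖y‖ with hrdef
    -- integrability of the pieces
    have hI1 : Integrable (fun ξ : EuclideanSpace ℝ (Fin d) =>
        Complex.exp (Complex.I * ((inner ℝ y ξ : ℝ) : ℂ)) * (((1 - χ (r • ξ)) * ‖ξ‖ ^ (-m) : ℝ) : ℂ)) := by
      refine aux_integrable d m hm0 hm (fun ξ => 1 - χ (r • ξ))
        (continuous_const.sub (hχ_smooth.continuous.comp (continuous_const_smul r)))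
        (1 + B) (fun ξ => ?_) r⁻¹ (by positivity) (fun ξ hξ => ?_) y
      · calc |1 - χ (r • ξ)| ≤ |1| + |χ (r • ξ)| := abs_sub _ _
          _ ≤ 1 + B := by rw [abs_one]; exact add_le_add_right (hB' _) 1
      · have : ‖r • ξ‖ ≤ 1 := by
          rw [norm_smul, Real.norm_eq_abs, abs_of_pos hr]
          calc r * ‖ξ‖ ≤ r * r⁻¹ := mul_le_mul_of_nonneg_left hξ.le hr.le
            _ = 1 := mul_inv_cancel₀ hr.ne'
        show 1 - χ (r • ξ) = 0
        rw [hχ_one _ this, sub_self]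
    have hI2 : Integrable (fun ξ : EuclideanSpace ℝ (Fin d) =>
        Complex.exp (Complex.I * ((inner ℝ y ξ : ℝ) : ℂ)) *
          ((‖ξ‖ ^ (-m) * (χ (r • ξ) - χ ξ) : ℝ) : ℂ)) := by
      have haux := aux_integrable d m hm0 hm (fun ξ => χ (r • ξ) - χ ξ)
        ((hχ_smooth.continuous.comp (continuous_const_smul r)).sub hχ_smooth.continuous)
        (B + B) (fun ξ => (abs_sub _ _).trans (add_le_add (hB' _) (hB' _)))
        (min 1 r⁻¹) (lt_min one_pos (by positivity)) (fun ξ hξ => ?_) y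
      · have heq : (fun ξ : EuclideanSpace ℝ (Fin d) =>
            Complex.exp (Complex.I * ((inner ℝ y ξ : ℝ) : ℂ)) *
              ((‖ξ‖ ^ (-m) * (χ (r • ξ) - χ ξ) : ℝ) : ℂ)) =
            fun ξ : EuclideanSpace ℝ (Fin d) =>
            Complex.exp (Complex.I * ((inner ℝ y ξ : ℝ) : ℂ)) *
              (((χ (r • ξ) - χ ξ) * ‖ξ‖ ^ (-m) : ℝ) : ℂ) := by
          funext ξ; rw [mul_comm (‖ξ‖ ^ (-m)) (χ (r • ξ) - χ ξ)]
        rw [heq]; exact haux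
      · have h1 : χ ξ = 1 := hχ_one _ (le_of_lt (lt_of_lt_of_le hξ (min_le_left _ _)))
        have h2 : χ (r • ξ) = 1 := by
          apply hχ_one
          rw [norm_smul, Real.norm_eq_abs, abs_of_pos hr]
          have := lt_of_lt_of_le hξ (min_le_right 1 r⁻¹)
          calc r * ‖ξ‖ ≤ r * r⁻¹ := mul_le_mul_of_nonneg_left this.le hr.le
            _ = 1 := mul_inv_cancel₀ hr.ne'
        show χ (r • ξ) - χ ξ = 0
        rw [h1, h2, sub_self]
    refine ⟨hI2, ?_⟩
    -- the scaled direction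
    set θ : EuclideanSpace ℝ (Fin d) := r⁻¹ • y with hθdef
    have hθn : ‖θ‖ = 1 := by
      rw [hθdef, norm_smul, Real.norm_eq_abs, abs_of_pos (inv_pos.mpr hr), ← hrdef,
        inv_mul_cancel₀ hr.ne']
    -- pointwise scaling identity
    have hpoint : ∀ ξ : EuclideanSpace ℝ (Fin d),
        Complex.exp (Complex.I * ((inner ℝ θ (r • ξ) : ℝ) : ℂ)) *
            (((1 - χ (r • ξ)) * ‖r • ξ‖ ^ (-m) : ℝ) : ℂ) =
          ((r ^ (-m) : ℝ) : ℂ) *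
            (Complex.exp (Complex.I * ((inner ℝ y ξ : ℝ) : ℂ)) *
              (((1 - χ (r • ξ)) * ‖ξ‖ ^ (-m) : ℝ) : ℂ)) := by
      intro ξ
      have hinner : (inner ℝ θ (r • ξ) : ℝ) = (inner ℝ y ξ : ℝ) := by
        rw [real_inner_smul_right, hθdef, real_inner_smul_left, ← mul_assoc,
          mul_inv_cancel₀ hr.ne', one_mul]
      have hnrm : ‖r • ξ‖ ^ (-m) = r ^ (-m) * ‖ξ‖ ^ (-m) := by
        rw [norm_smul, Real.norm_eq_abs, abs_of_pos hr, Real.mul_rpow hr.le (norm_nonneg _)]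
      rw [hinner, hnrm]
      push_cast
      ring
    have hcs := Measure.integral_comp_smul_of_nonneg (μ := volume)
      (fun η : EuclideanSpace ℝ (Fin d) =>
        Complex.exp (Complex.I * ((inner ℝ θ η : ℝ) : ℂ)) * (((1 - χ η) * ‖η‖ ^ (-m) : ℝ) : ℂ))
      r (hR := hr.le)
    rw [finrank_euclideanSpace_fin] at hcs
    simp_rw [hpoint] at hcs
    rw [integral_const_mul] at hcs
    -- hcs : ((r^(-m):ℝ):ℂ) * ∫ P1 = (r ^ d)⁻¹ • ∫ h
    have e1 : (∫ ξ : EuclideanSpace ℝ (Fin d),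
        Complex.exp (Complex.I * ((inner ℝ y ξ : ℝ) : ℂ)) *
          (((1 - χ (r • ξ)) * ‖ξ‖ ^ (-m) : ℝ) : ℂ)) =
        ((r ^ (m - (d:ℝ)) : ℝ) : ℂ) *
          ∫ η : EuclideanSpace ℝ (Fin d),
            Complex.exp (Complex.I * ((inner ℝ θ η : ℝ) : ℂ)) * (((1 - χ η) * ‖η‖ ^ (-m) : ℝ) : ℂ) := by
      have hmm1 : ((r ^ m : ℝ) : ℂ) * ((r ^ (-m) : ℝ) : ℂ) = 1 := by
        rw [← Complex.ofReal_mul, ← Real.rpow_add hr]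
        norm_num
      have hpow : (r ^ m : ℝ) * ((r ^ d : ℝ))⁻¹ = r ^ (m - (d:ℝ)) := by
        rw [← Real.rpow_natCast r d, ← Real.rpow_neg_one (r ^ (d:ℝ))]
        rw [← Real.rpow_natCast r d] at *
        rw [← Real.rpow_mul hr.le, ← Real.rpow_add hr]
        ring_nf
      calc (∫ ξ : EuclideanSpace ℝ (Fin d),
            Complex.exp (Complex.I * ((inner ℝ y ξ : ℝ) : ℂ)) *
              (((1 - χ (r • ξ)) * ‖ξ‖ ^ (-m) : ℝ) : ℂ))
          = ((r ^ m : ℝ) : ℂ) * (((r ^ (-m) : ℝ) : ℂ) * ∫ ξ : EuclideanSpace ℝ (Fin d),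
              Complex.exp (Complex.I * ((inner ℝ y ξ : ℝ) : ℂ)) *
                (((1 - χ (r • ξ)) * ‖ξ‖ ^ (-m) : ℝ) : ℂ)) := by
            rw [← mul_assoc, hmm1, one_mul]
        _ = ((r ^ m : ℝ) : ℂ) * ((r ^ d : ℝ)⁻¹ •
              ∫ η : EuclideanSpace ℝ (Fin d),
                Complex.exp (Complex.I * ((inner ℝ θ η : ℝ) : ℂ)) *
                  (((1 - χ η) * ‖η‖ ^ (-m) : ℝ) : ℂ)) := by rw [hcs]
        _ = ((r ^ (m - (d:ℝ)) : ℝ) : ℂ) *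
              ∫ η : EuclideanSpace ℝ (Fin d),
                Complex.exp (Complex.I * ((inner ℝ θ η : ℝ) : ℂ)) *
                  (((1 - χ η) * ‖η‖ ^ (-m) : ℝ) : ℂ) := by
            rw [Complex.real_smul, ← mul_assoc, ← Complex.ofReal_mul, hpow]
    -- rotate θ to θ₀
    have hrot : (∫ η : EuclideanSpace ℝ (Fin d),
        Complex.exp (Complex.I * ((inner ℝ θ η : ℝ) : ℂ)) * (((1 - χ η) * ‖η‖ ^ (-m) : ℝ) : ℂ)) =
        ∫ η : EuclideanSpace ℝ (Fin d),
        Complex.exp (Complex.I * ((inner ℝ θ₀ η : ℝ) : ℂ)) * (((1 - χ η) * ‖η‖ ^ (-m) : ℝ) : ℂ) :=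
      aux_rot d m χ hχ_radial θ θ₀ (by rw [hθn, hθ₀])
    -- split the integrand
    have hsplit : (fun ξ : EuclideanSpace ℝ (Fin d) =>
        Complex.exp (Complex.I * ((inner ℝ y ξ : ℝ) : ℂ)) * (((1 - χ ξ) * ‖ξ‖ ^ (-m) : ℝ) : ℂ)) =
        fun ξ : EuclideanSpace ℝ (Fin d) =>
          Complex.exp (Complex.I * ((inner ℝ y ξ : ℝ) : ℂ)) *
              (((1 - χ (r • ξ)) * ‖ξ‖ ^ (-m) : ℝ) : ℂ) +
            Complex.exp (Complex.I * ((inner ℝ y ξ : ℝ) : ℂ)) *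
              ((‖ξ‖ ^ (-m) * (χ (r • ξ) - χ ξ) : ℝ) : ℂ) := by
      funext ξ
      push_cast
      ring
    rw [hsplit, integral_add hI1 hI2, e1, hrot]
    ring
end

section
/- Let $d = 3$ and $0 < \mu < 1$, $1 < p < 3/(2+\mu)$, and let $D \subset \mathbb{R}^3$ be a bounded domain. Then for every $x \in \mathbb{R}^3$, the function $y \mapsto |x-y|^{-2}$ belongs to the fractional Sobolev space $W^{\mu,p}(D)$; equivalently, the Slobodeckij seminorm is finite: $\int_D\int_D \frac{\big||x-y|^{-2} - |x-z|^{-2}\big|^p}{|y-z|^{p\mu+3}}\,\mathrm{d}y\,\mathrm{d}z < \infty$, and also $\int_D |x-y|^{-2p}\,\mathrm{d}y < \infty$. -/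
/-!
Write `a = ‖x - y‖`, `b = ‖x - z‖` and `r = ‖y - z‖ ≥ |a - b|`. Interpolating between
`|a⁻² - b⁻²| ≤ min(a, b)⁻²` and `|a⁻² - b⁻²| ≤ 2 |a - b| min(a, b)⁻³` gives
`|a⁻² - b⁻²| ≤ 2 r^θ min(a, b)^-(2+θ)` for `θ ∈ [0, 1]`, so the Slobodeckij integrand is at most
`2^p (a^-q + b^-q) r^-s` with `q = p(2 + θ)` and `s = pμ + 3 - pθ`. Choosing `μ < θ` with `q < 3`
makes both singularities locally integrable in `ℝ³`, and by Tonelli and the symmetry of `r` the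
double integral is at most `2^(p+1) (sup_y ∫ r^-s dz) (∫ a^-q dy)`.
-/

open MeasureTheory Metric Module
open scoped ENNReal

theorem le_rpow_mul_rpow_of_le_of_le {x A B θ : ℝ} (hx : 0 ≤ x) (hA : x ≤ A) (hB : x ≤ B)
    (hθ0 : 0 ≤ θ) (hθ1 : θ ≤ 1) : x ≤ B ^ θ * A ^ (1 - θ) :=
  calc x = x ^ θ * x ^ (1 - θ) := by
        rw [← Real.rpow_add' hx (by norm_num), add_sub_cancel, Real.rpow_one]
    _ ≤ B ^ θ * A ^ (1 - θ) :=
        mul_le_mul (Real.rpow_le_rpow hx hB hθ0) (Real.rpow_le_rpow hx hA (by linarith))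
          (Real.rpow_nonneg hx _) (Real.rpow_nonneg (hx.trans hB) _)

theorem rpow_neg_two_sub_rpow_neg_two_le {a b : ℝ} (ha : 0 < a) (hab : a ≤ b) :
    a ^ (-2 : ℝ) - b ^ (-2 : ℝ) ≤ 2 * (b - a) * a ^ (-3 : ℝ) := by
  have hb : 0 < b := ha.trans_le hab
  rw [Real.rpow_neg ha.le, Real.rpow_neg hb.le, Real.rpow_neg ha.le, ← sub_nonneg]
  norm_cast
  have hdiff : 2 * (b - a) * (a ^ 3)⁻¹ - ((a ^ 2)⁻¹ - (b ^ 2)⁻¹)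
      = (b - a) * (2 * b ^ 2 - a * (a + b)) / (a ^ 3 * b ^ 2) := by
    field_simp
    ring
  rw [hdiff]
  exact div_nonneg (mul_nonneg (by linarith) (by nlinarith)) (by positivity)

theorem abs_rpow_neg_two_sub_rpow_neg_two_le {a b θ : ℝ} (ha : 0 < a) (hb : 0 < b)
    (hθ0 : 0 ≤ θ) (hθ1 : θ ≤ 1) :
    |a ^ (-2 : ℝ) - b ^ (-2 : ℝ)| ≤ 2 * |a - b| ^ θ * min a b ^ (-(2 + θ)) := by
  wlog hab : a ≤ b generalizing a b
  · rw [abs_sub_comm, abs_sub_comm a, min_comm]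
    exact this hb ha (le_of_not_ge hab)
  have hΔ : 0 ≤ a ^ (-2 : ℝ) - b ^ (-2 : ℝ) :=
    sub_nonneg.2 (Real.rpow_le_rpow_of_nonpos ha hab (by norm_num))
  have hA : a ^ (-2 : ℝ) - b ^ (-2 : ℝ) ≤ a ^ (-2 : ℝ) := by
    linarith [Real.rpow_nonneg hb.le (-2 : ℝ)]
  rw [abs_of_nonneg hΔ, abs_of_nonpos (by linarith), neg_sub, min_eq_left hab]
  calc a ^ (-2 : ℝ) - b ^ (-2 : ℝ)
      ≤ (2 * (b - a) * a ^ (-3 : ℝ)) ^ θ * (a ^ (-2 : ℝ)) ^ (1 - θ) :=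
        le_rpow_mul_rpow_of_le_of_le hΔ hA (rpow_neg_two_sub_rpow_neg_two_le ha hab) hθ0 hθ1
    _ = 2 ^ θ * (b - a) ^ θ * a ^ (-(2 + θ)) := by
        rw [Real.mul_rpow (by linarith) (by positivity), Real.mul_rpow (by norm_num) (by linarith),
          ← Real.rpow_mul ha.le, ← Real.rpow_mul ha.le, mul_assoc, ← Real.rpow_add ha]
        ring_nf
    _ ≤ 2 * (b - a) ^ θ * a ^ (-(2 + θ)) := by
        gcongr
        simpa using Real.rpow_le_rpow_of_exponent_le one_le_two hθ1

theorem abs_rpow_neg_two_sub_rpow_div_le {a b r p σ θ : ℝ} (ha : 0 < a) (hb : 0 < b)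
    (hr : 0 < r) (habr : |a - b| ≤ r) (hp : 0 ≤ p) (hθ0 : 0 ≤ θ) (hθ1 : θ ≤ 1) :
    |a ^ (-2 : ℝ) - b ^ (-2 : ℝ)| ^ p / r ^ σ
      ≤ 2 ^ p * ((a ^ (-(p * (2 + θ))) + b ^ (-(p * (2 + θ)))) * r ^ (-(σ - p * θ))) := by
  have hm : 0 < min a b := lt_min ha hb
  have hmin : min a b ^ (-(p * (2 + θ))) ≤ a ^ (-(p * (2 + θ))) + b ^ (-(p * (2 + θ))) := by
    rcases min_choice a b with h | h <;> rw [h]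
    · linarith [Real.rpow_nonneg hb.le (-(p * (2 + θ)))]
    · linarith [Real.rpow_nonneg ha.le (-(p * (2 + θ)))]
  calc |a ^ (-2 : ℝ) - b ^ (-2 : ℝ)| ^ p / r ^ σ
      ≤ (2 * r ^ θ * min a b ^ (-(2 + θ))) ^ p / r ^ σ := by
        gcongr
        exact (abs_rpow_neg_two_sub_rpow_neg_two_le ha hb hθ0 hθ1).trans (by gcongr)
    _ = 2 ^ p * (min a b ^ (-(p * (2 + θ))) * r ^ (-(σ - p * θ))) := by
        rw [Real.mul_rpow (by positivity) (by positivity),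
          Real.mul_rpow (by norm_num) (by positivity),
          ← Real.rpow_mul hr.le, ← Real.rpow_mul hm.le, div_eq_mul_inv, ← Real.rpow_neg hr.le,
          neg_sub, sub_eq_add_neg (p * θ), Real.rpow_add hr]
        ring_nf
    _ ≤ 2 ^ p * ((a ^ (-(p * (2 + θ))) + b ^ (-(p * (2 + θ)))) * r ^ (-(σ - p * θ))) := by
        gcongr

theorem ofReal_abs_norm_sub_rpow_neg_two_sub_div_le {E : Type*} [NormedAddCommGroup E]
    {x y z : E} (hyx : y ≠ x) (hzx : z ≠ x) (hzy : z ≠ y) {p σ θ : ℝ} (hp : 0 ≤ p)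
    (hθ0 : 0 ≤ θ) (hθ1 : θ ≤ 1) :
    ENNReal.ofReal (|‖x - y‖ ^ (-2 : ℝ) - ‖x - z‖ ^ (-2 : ℝ)| ^ p / ‖y - z‖ ^ σ)
      ≤ ENNReal.ofReal (2 ^ p) * ((ENNReal.ofReal (‖x - y‖ ^ (-(p * (2 + θ))))
        + ENNReal.ofReal (‖x - z‖ ^ (-(p * (2 + θ)))))
        * ENNReal.ofReal (‖y - z‖ ^ (-(σ - p * θ)))) := by
  have hyz : |‖x - y‖ - ‖x - z‖| ≤ ‖y - z‖ := by
    simpa [norm_sub_rev z] using abs_norm_sub_norm_le (x - y) (x - z)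
  rw [← ENNReal.ofReal_add (by positivity) (by positivity), ← ENNReal.ofReal_mul (by positivity),
    ← ENNReal.ofReal_mul (by positivity)]
  exact ENNReal.ofReal_le_ofReal <| abs_rpow_neg_two_sub_rpow_div_le (norm_sub_pos_iff.2 hyx.symm)
    (norm_sub_pos_iff.2 hzx.symm) (norm_sub_pos_iff.2 hzy.symm) hyz hp hθ0 hθ1

section RpowNegIntegrable

variable {E : Type*} [NormedAddCommGroup E] [MeasurableSpace E] [BorelSpace E] (μ : Measure E)

theorem lintegral_closedBall_norm_rpow_neg_lt_top [NormedSpace ℝ E] [FiniteDimensional ℝ E]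
    [μ.IsAddHaarMeasure] (hd : 1 ≤ finrank ℝ E) {t : ℝ}
    (ht : t < finrank ℝ E) (ρ : ℝ) :
    ∫⁻ w in closedBall 0 ρ, ENNReal.ofReal (‖w‖ ^ (-t)) ∂μ < ⊤ := by
  have hloc : LocallyIntegrable (fun w : E ↦ ‖w‖ ^ (-t)) μ :=
    locallyIntegrable_of_norm_le_rpow (C := 1) hd ht
      (.of_forall fun w ↦ by rw [one_mul, Real.norm_of_nonneg (by positivity)])
      (measurable_norm.pow_const _).aestronglyMeasurable
  exact (hloc.integrableOn_isCompact (isCompact_closedBall 0 ρ)).lintegral_lt_top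

theorem setLIntegral_norm_sub_rpow_neg_le [μ.IsAddRightInvariant] {s : Set E} {c : E} {ρ : ℝ}
    (hs : s ⊆ closedBall c ρ) (t : ℝ) :
    ∫⁻ w in s, ENNReal.ofReal (‖c - w‖ ^ (-t)) ∂μ
      ≤ ∫⁻ w in closedBall 0 ρ, ENNReal.ofReal (‖w‖ ^ (-t)) ∂μ := by
  set g : E → ℝ≥0∞ := (closedBall 0 ρ).indicator fun w ↦ ENNReal.ofReal (‖w‖ ^ (-t)) with hg_def
  have hg : Measurable g := (by fun_prop : Measurable _).indicator measurableSet_closedBall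
  calc ∫⁻ w in s, ENNReal.ofReal (‖c - w‖ ^ (-t)) ∂μ ≤ ∫⁻ w in s, g (w - c) ∂μ := by
        refine setLIntegral_mono (hg.comp (measurable_id.sub_const c)) fun w hw ↦ ?_
        have : w - c ∈ closedBall 0 ρ := by simpa [dist_eq_norm] using hs hw
        rw [hg_def, Set.indicator_of_mem this, norm_sub_rev]
    _ ≤ ∫⁻ w, g (w - c) ∂μ := setLIntegral_le_lintegral _ _
    _ = ∫⁻ w in closedBall 0 ρ, ENNReal.ofReal (‖w‖ ^ (-t)) ∂μ := by
        rw [lintegral_sub_right_eq_self, lintegral_indicator measurableSet_closedBall]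

theorem ae_restrict_setLIntegral_norm_sub_rpow_neg_le [μ.IsAddRightInvariant] {s : Set E} {c : E}
    {R : ℝ} (hs : s ⊆ closedBall c R) (t : ℝ) :
    ∀ᵐ y ∂μ.restrict s, ∫⁻ z in s, ENNReal.ofReal (‖y - z‖ ^ (-t)) ∂μ
      ≤ ∫⁻ w in closedBall 0 (R + R), ENNReal.ofReal (‖w‖ ^ (-t)) ∂μ := by
  filter_upwards
    [ae_restrict_of_ae_restrict_of_subset hs (ae_restrict_mem measurableSet_closedBall)] with y hy
  refine setLIntegral_norm_sub_rpow_neg_le μ (fun z hz ↦ ?_) t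
  exact mem_closedBall.2 ((dist_triangle z c y).trans (add_le_add (hs hz) (mem_closedBall'.1 hy)))

theorem setLIntegral_norm_sub_rpow_neg_lt_top [NormedSpace ℝ E] [FiniteDimensional ℝ E]
    [μ.IsAddHaarMeasure] (hd : 1 ≤ finrank ℝ E) {t : ℝ}
    (ht : t < finrank ℝ E) {s : Set E} (hs : Bornology.IsBounded s) (c : E) :
    ∫⁻ w in s, ENNReal.ofReal (‖c - w‖ ^ (-t)) ∂μ < ⊤ := by
  obtain ⟨ρ, hρ⟩ := hs.subset_closedBall c
  exact (setLIntegral_norm_sub_rpow_neg_le μ hρ t).trans_lt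
    (lintegral_closedBall_norm_rpow_neg_lt_top μ hd ht ρ)

end RpowNegIntegrable

theorem lintegral_lintegral_add_mul_le_of_symm {α : Type*} [MeasurableSpace α] {μ : Measure α}
    [SFinite μ] {F : α → ℝ≥0∞} {K : α → α → ℝ≥0∞} (hF : Measurable F)
    (hK : Measurable (Function.uncurry K)) (hsymm : ∀ y z, K y z = K z y) {C : ℝ≥0∞}
    (hC : ∀ᵐ y ∂μ, ∫⁻ z, K y z ∂μ ≤ C) :
    ∫⁻ y, ∫⁻ z, (F y + F z) * K y z ∂μ ∂μ ≤ 2 * (C * ∫⁻ y, F y ∂μ) := by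
  have hFK : Measurable (Function.uncurry fun y z ↦ F y * K y z) :=
    (hF.comp measurable_fst).mul hK
  have hswap : ∫⁻ y, ∫⁻ z, F z * K y z ∂μ ∂μ = ∫⁻ y, ∫⁻ z, F y * K y z ∂μ ∂μ := by
    rw [lintegral_lintegral_swap ((hF.comp measurable_snd).mul hK).aemeasurable]
    simp_rw [hsymm]
  calc ∫⁻ y, ∫⁻ z, (F y + F z) * K y z ∂μ ∂μ
      = 2 * ∫⁻ y, ∫⁻ z, F y * K y z ∂μ ∂μ := by
        have hFK_left (y : α) : Measurable fun z ↦ F y * K y z := hFK.of_uncurry_left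
        have hFK_int : Measurable fun y ↦ ∫⁻ z, F y * K y z ∂μ := hFK.lintegral_prod_right'
        simp_rw [add_mul]
        rw [lintegral_congr fun y ↦ lintegral_add_left (hFK_left y) _,
          lintegral_add_left hFK_int, hswap, two_mul]
    _ = 2 * ∫⁻ y, F y * ∫⁻ z, K y z ∂μ ∂μ := by
        simp_rw [lintegral_const_mul _ hK.of_uncurry_left]
    _ ≤ 2 * ∫⁻ y, C * F y ∂μ := by
        gcongr 1
        refine lintegral_mono_ae (hC.mono fun y hy ↦ ?_)
        rw [mul_comm]
        gcongr
    _ = 2 * (C * ∫⁻ y, F y ∂μ) := by rw [lintegral_const_mul _ hF]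

theorem exists_interpolation_exponent {μ p : ℝ} (hp1 : 1 < p)
    (hpμ : p * (2 + μ) < 3) : ∃ θ, μ < θ ∧ θ ≤ 1 ∧ p * (2 + θ) < 3 := by
  have hp0 : 0 < p := one_pos.trans hp1
  have hμp : 2 + μ < 3 / p := by rw [lt_div_iff₀ hp0]; linarith
  have h3p : 3 / p < 3 := div_lt_self three_pos hp1
  refine ⟨(μ + (3 / p - 2)) / 2, by linarith, by linarith, ?_⟩
  calc p * (2 + (μ + (3 / p - 2)) / 2) < p * (3 / p) := by gcongr; linarith
    _ = 3 := mul_div_cancel₀ _ hp0.ne'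

theorem inv_dist_sq_mem_fractional_sobolev_general
    (μ p : ℝ) (hμ0 : 0 < μ) (hp1 : 1 < p) (hp2 : p < 3 / (2 + μ))
    (D : Set (EuclideanSpace ℝ (Fin 3)))
    (hDb : Bornology.IsBounded D) (x : EuclideanSpace ℝ (Fin 3)) :
    (∫⁻ y in D, ∫⁻ z in D,
        ENNReal.ofReal (|‖x - y‖ ^ (-(2 : ℝ)) - ‖x - z‖ ^ (-(2 : ℝ))| ^ p / ‖y - z‖ ^ (p * μ + 3)))
        < ⊤ ∧
    (∫⁻ y in D, ENNReal.ofReal (‖x - y‖ ^ (-(2 * p)))) < ⊤ := by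
  have hd : finrank ℝ (EuclideanSpace ℝ (Fin 3)) = 3 := finrank_euclideanSpace_fin
  have hpμ : p * (2 + μ) < 3 := (lt_div_iff₀ (by linarith)).1 hp2
  obtain ⟨θ, hμθ, hθ1, hθ⟩ := exists_interpolation_exponent hp1 hpμ
  obtain ⟨R, hR⟩ := hDb.subset_closedBall x
  set F := fun w : EuclideanSpace ℝ (Fin 3) ↦ ENNReal.ofReal (‖x - w‖ ^ (-(p * (2 + θ))))
  set K := fun y z : EuclideanSpace ℝ (Fin 3) ↦ ENNReal.ofReal (‖y - z‖ ^ (-(p * μ + 3 - p * θ)))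
  set C := ∫⁻ w in closedBall (0 : EuclideanSpace ℝ (Fin 3)) (R + R),
    ENNReal.ofReal (‖w‖ ^ (-(p * μ + 3 - p * θ)))
  have hF : ∫⁻ y in D, F y < ⊤ :=
    setLIntegral_norm_sub_rpow_neg_lt_top _ (by simp [hd]) (by simp [hd, hθ]) hDb x
  have hC : C < ⊤ :=
    lintegral_closedBall_norm_rpow_neg_lt_top _ (by simp [hd]) (by simp [hd]; nlinarith) _
  have hKC : ∀ᵐ y ∂volume.restrict D, ∫⁻ z in D, K y z ≤ C :=
    ae_restrict_setLIntegral_norm_sub_rpow_neg_le _ hR _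
  have hpt : ∀ᵐ y ∂volume.restrict D, ∀ᵐ z ∂volume.restrict D,
      ENNReal.ofReal (|‖x - y‖ ^ (-(2 : ℝ)) - ‖x - z‖ ^ (-(2 : ℝ))| ^ p / ‖y - z‖ ^ (p * μ + 3))
        ≤ ENNReal.ofReal (2 ^ p) * ((F y + F z) * K y z) := by
    filter_upwards [ae_restrict_of_ae (volume.ae_ne x)] with y hyx
    filter_upwards [ae_restrict_of_ae (volume.ae_ne x), ae_restrict_of_ae (volume.ae_ne y)]
      with z hzx hzy
    exact ofReal_abs_norm_sub_rpow_neg_two_sub_div_le hyx hzx hzy (by linarith) (by linarith) hθ1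
  refine ⟨?_, setLIntegral_norm_sub_rpow_neg_lt_top _ (by simp [hd])
    (by simp [hd]; nlinarith) hDb x⟩
  calc _ ≤ ∫⁻ y in D, ∫⁻ z in D, ENNReal.ofReal (2 ^ p) * ((F y + F z) * K y z) :=
        lintegral_mono_ae (hpt.mono fun y hy ↦ lintegral_mono_ae hy)
    _ = ENNReal.ofReal (2 ^ p) * ∫⁻ y in D, ∫⁻ z in D, (F y + F z) * K y z := by
        simp_rw [lintegral_const_mul' _ _ ENNReal.ofReal_ne_top]
    _ ≤ ENNReal.ofReal (2 ^ p) * (2 * (C * ∫⁻ y in D, F y)) := by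
        gcongr
        exact lintegral_lintegral_add_mul_le_of_symm (by fun_prop) (by fun_prop)
          (fun y z ↦ by simp only [K, norm_sub_rev y]) hKC
    _ < ⊤ := by finiteness

theorem inv_dist_sq_mem_fractional_sobolev
    (μ p : ℝ) (hμ0 : 0 < μ) (hμ1 : μ < 1) (hp1 : 1 < p) (hp2 : p < 3 / (2 + μ))
    (D : Set (EuclideanSpace ℝ (Fin 3))) (hDo : IsOpen D) (hDne : D.Nonempty)
    (hDb : Bornology.IsBounded D) (x : EuclideanSpace ℝ (Fin 3)) :
    (∫⁻ y in D, ∫⁻ z in D,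
        ENNReal.ofReal (|‖x - y‖ ^ (-(2 : ℝ)) - ‖x - z‖ ^ (-(2 : ℝ))| ^ p / ‖y - z‖ ^ (p * μ + 3)))
        < ⊤ ∧
    (∫⁻ y in D, ENNReal.ofReal (‖x - y‖ ^ (-(2 * p)))) < ⊤ :=
  inv_dist_sq_mem_fractional_sobolev_general μ p hμ0 hp1 hp2 D hDb x
end
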